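/- For every ℓ ∈ {0,…,N−1}, every b ∈ {0,…,L−1}, every n ≥ 0 and every ā ∈ {0,…,L−1}^n: ν(J^ℓ_{bā}) = Σ_{k=0}^{N−1} (1/M)·A_b(ℓ,k)·ν(J^k_ā), where bā denotes the concatenated word (b,a_1,…,a_n) and J^k_∅ = J^k. -/

import Mathlib

open MeasureTheory ProbabilityTheory Set ENNReal

/-- The composition `f_{i₁} ∘ ⋯ ∘ f_{iₙ}` along the word `w`, for the IFS
`f_i(x) = x/L + t i` on the line. -/
noncomputable def wordMap (L : ℕ) {M : ℕ} (t : Fin M → ℕ) (w : List (Fin M)) (x : ℝ) : ℝ :=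
  w.foldr (fun i y => y / (L : ℝ) + (t i : ℝ)) x

/-- A node of the `M`-ary tree is retained (for the realization `ω`) if it and all of
its ancestors carry the label `true`. -/
def retained {M : ℕ} {Ω : Type*} (label : List (Fin M) → Ω → Bool) (ω : Ω)
    (w : List (Fin M)) : Prop :=
  ∀ v : List (Fin M), v <+: w → label v ω = true

/-- The coin tossing integer self-similar set on the line:
`Λ = ⋂_{n ≥ 1} ⋃_{w ∈ E_n} f_w (I)` where `I = [0, L·t_{M-1}/(L-1)]` and `E_n` is the set of
retained level-`n` words. -/
noncomputable def randSet (L M : ℕ) (hM : 0 < M) (t : Fin M → ℕ) {Ω : Type*}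
    (label : List (Fin M) → Ω → Bool) (ω : Ω) : Set ℝ :=
  ⋂ (n : ℕ), ⋂ (_ : 1 ≤ n),
    ⋃ (w : List (Fin M)) (_ : w.length = n) (_ : retained label ω w),
      wordMap L t w ''
        Set.Icc (0 : ℝ) ((L : ℝ) * (t ⟨M - 1, Nat.sub_lt hM Nat.one_pos⟩ : ℝ) / ((L : ℝ) - 1))

/-- The basic type interval `J^k = [(J k)·L, (J k)·L + L]`. -/
def basicInt (L : ℕ) {N : ℕ} (J : Fin N → ℤ) (k : Fin N) : Set ℝ :=
  Set.Icc ((J k : ℝ) * L) ((J k : ℝ) * L + L)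

/-- The matrix `A_a`: `A_a(ℓ,k)` is the number of maps `f_i` (counted with multiplicity,
i.e. it equals `n_i` when `S_i (J^k) = J^ℓ_a` for a distinct map `S_i`, and `0` otherwise)
mapping `J^k` onto the `a`-th level-one `L`-adic subinterval of `J^ℓ`. -/
noncomputable def Amat (L M : ℕ) (t : Fin M → ℕ) {N : ℕ} (J : Fin N → ℤ) (a : Fin L) :
    Matrix (Fin N) (Fin N) ℕ :=
  fun ℓ k => Set.ncard {i : Fin M |
    (fun x : ℝ => x / (L : ℝ) + (t i : ℝ)) '' basicInt L J k
      = Set.Icc ((J ℓ : ℝ) * L + (a : ℝ)) ((J ℓ : ℝ) * L + (a : ℝ) + 1)}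

/-- The `L`-adic subinterval `J^k_ā` of the basic interval `J^k`: it has length `L^{1−n}`
and left endpoint `(left endpoint of J^k) + L·Σ_{j=1}^n a_j·L^{−j}`. -/
noncomputable def subCylinder (L : ℕ) {N : ℕ} (J : Fin N → ℤ) (k : Fin N) {n : ℕ}
    (a : Fin n → Fin L) : Set ℝ :=
  Set.Icc ((J k : ℝ) * L + L * ∑ j : Fin n, (a j : ℝ) * (L : ℝ) ^ (-(j : ℤ) - 1))
    ((J k : ℝ) * L + L * ∑ j : Fin n, (a j : ℝ) * (L : ℝ) ^ (-(j : ℤ) - 1)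
      + (L : ℝ) ^ (1 - (n : ℤ)))

/-!
Self-similarity gives `ν E = M⁻¹ · Σ_i ν (f_i⁻¹ E)`. The preimage of `J^ℓ_{bā}` under `f_i` is
the cylinder with digits `ā` over the integer interval `[zL, zL + L]`, `z = J^ℓ·L + b − t_i`.
If `z` is not a basic type that interval is `ν`-null; otherwise `z` is `J^k` for exactly one `k`,
and the number of `i` landing on `J^k` is `A_b(ℓ,k)`.
-/

namespace AdicCylinder

variable {L : ℕ}

noncomputable def digitSum (L : ℕ) {n : ℕ} (a : Fin n → Fin L) : ℝ :=
  ∑ j : Fin n, (a j : ℝ) * (L : ℝ) ^ (-(j : ℤ) - 1)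

/-- `subCylinder` with `J^k` replaced by an arbitrary interval `[zL, zL + L]`, `z ∈ ℤ`: preimages
of cylinders under the `f_i` sit over integers `z` that need not be basic types. -/
noncomputable def cylinder (L : ℕ) (z : ℤ) {n : ℕ} (a : Fin n → Fin L) : Set ℝ :=
  Icc ((z : ℝ) * L + L * digitSum L a) ((z : ℝ) * L + L * digitSum L a + (L : ℝ) ^ (1 - (n : ℤ)))

theorem subCylinder_eq_cylinder {N : ℕ} (J : Fin N → ℤ) (k : Fin N) {n : ℕ}
    (a : Fin n → Fin L) : subCylinder L J k a = cylinder L (J k) a :=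
  rfl

theorem digitSum_nonneg {n : ℕ} (a : Fin n → Fin L) : 0 ≤ digitSum L a :=
  Finset.sum_nonneg fun _ _ => by positivity

theorem digitSum_add_zpow_le_one (hL : 0 < L) {n : ℕ} (a : Fin n → Fin L) :
    digitSum L a + (L : ℝ) ^ (-(n : ℤ)) ≤ 1 := by
  induction n with
  | zero => simp [digitSum]
  | succ n ih =>
    have hL0 : (L : ℝ) ≠ 0 := by positivity
    have hdigit : (a (Fin.last n) : ℝ) + 1 ≤ L := by exact_mod_cast (a (Fin.last n)).isLt
    have hexp : -((n + 1 : ℕ) : ℤ) = -(n : ℤ) - 1 := by push_cast; ring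
    have hpow : (L : ℝ) * (L : ℝ) ^ (-(n : ℤ) - 1) = (L : ℝ) ^ (-(n : ℤ)) := by
      rw [← zpow_one_add₀ hL0, add_sub_cancel]
    calc digitSum L a + (L : ℝ) ^ (-((n + 1 : ℕ) : ℤ))
        = digitSum L (fun j => a j.castSucc)
            + ((a (Fin.last n) : ℝ) + 1) * (L : ℝ) ^ (-(n : ℤ) - 1) := by
          simp only [digitSum, Fin.sum_univ_castSucc, Fin.val_castSucc, Fin.val_last, hexp]
          ring
      _ ≤ digitSum L (fun j => a j.castSucc) + (L : ℝ) * (L : ℝ) ^ (-(n : ℤ) - 1) := by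
          gcongr
      _ ≤ 1 := by rw [hpow]; exact ih _

theorem digitSum_cons (hL : 0 < L) {n : ℕ} (b : Fin L) (a : Fin n → Fin L) :
    digitSum L (Fin.cons b a : Fin (n + 1) → Fin L) = (b + digitSum L a) / L := by
  have hL0 : (L : ℝ) ≠ 0 := by positivity
  simp only [digitSum, Fin.sum_univ_succ, Fin.cons_zero, Fin.cons_succ, Fin.val_zero,
    Fin.val_succ, add_div, Finset.sum_div]
  congr 1
  · simp [div_eq_mul_inv]
  · refine Finset.sum_congr rfl fun j _ => ?_
    rw [mul_div_assoc, div_eq_mul_inv, ← zpow_sub_one₀ hL0]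
    push_cast; ring_nf

theorem cylinder_subset_Icc (hL : 0 < L) (z : ℤ) {n : ℕ} (a : Fin n → Fin L) :
    cylinder L z a ⊆ Icc ((z : ℝ) * L) ((z : ℝ) * L + L) := by
  have hL0 : (L : ℝ) ≠ 0 := by positivity
  have hlen : (L : ℝ) ^ (1 - (n : ℤ)) = L * (L : ℝ) ^ (-(n : ℤ)) := by
    rw [sub_eq_add_neg, zpow_add₀ hL0, zpow_one]
  have := digitSum_add_zpow_le_one hL a
  have := digitSum_nonneg a
  refine Icc_subset_Icc (by nlinarith) ?_
  rw [hlen]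
  have : (0 : ℝ) ≤ L := by positivity
  nlinarith

theorem preimage_div_add_const_Icc {K : Type*} [Field K] [LinearOrder K] [IsStrictOrderedRing K]
    {L : K} (hL : 0 < L) (c P Q : K) :
    (fun x => x / L + c) ⁻¹' Icc P Q = Icc ((P - c) * L) ((Q - c) * L) := by
  ext x
  simp only [mem_preimage, mem_Icc, ← sub_le_iff_le_add, ← le_sub_iff_add_le, le_div_iff₀ hL,
    div_le_iff₀ hL]

theorem preimage_cylinder_cons (hL : 0 < L) (c z : ℤ) (b : Fin L) {n : ℕ} (a : Fin n → Fin L) :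
    (fun x : ℝ => x / L + c) ⁻¹' cylinder L z (Fin.cons b a : Fin (n + 1) → Fin L)
      = cylinder L (z * L + b - c) a := by
  have hL0 : (L : ℝ) ≠ 0 := by positivity
  rw [cylinder, cylinder, preimage_div_add_const_Icc (by positivity), digitSum_cons hL]
  have hlen : (L : ℝ) ^ (1 - ((n + 1 : ℕ) : ℤ)) * L = (L : ℝ) ^ (1 - (n : ℤ)) := by
    rw [← zpow_add_one₀ hL0]; push_cast; ring_nf
  congr 1
  · push_cast; field_simp; ring
  · rw [← hlen]; push_cast; field_simp; ring

end AdicCylinder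

open AdicCylinder

theorem measure_apply_eq_mul_sum_preimage {α ι : Type*} [MeasurableSpace α] [Fintype ι]
    {ν : Measure α} {c : ℝ≥0∞} {f : ι → α → α} (hν : ν = c • ∑ i, ν.map (f i))
    (hf : ∀ i, Measurable (f i)) {s : Set α} (hs : MeasurableSet s) :
    ν s = c * ∑ i, ν (f i ⁻¹' s) := by
  conv_lhs => rw [hν]
  simp only [Measure.smul_apply, smul_eq_mul, Measure.finsetSum_apply, Measure.map_apply (hf _) hs]

open Finset in
theorem Finset.sum_comp_eq_sum_card_nsmul {ι κ β R : Type*} [Fintype ι] [Fintype κ]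
    [DecidableEq β] [AddCommMonoid R] {J : κ → β} (hJ : Function.Injective J) (z : ι → β)
    {g : β → R} (hg : ∀ y ∉ Set.range J, g y = 0) :
    ∑ i, g (z i) = ∑ k, #{i | z i = J k} • g (J k) := by
  have hfiber : ∀ i, g (z i) = ∑ k, if z i = J k then g (J k) else 0 := by
    intro i
    by_cases hi : z i ∈ Set.range J
    · obtain ⟨k₀, hk₀⟩ := hi
      rw [← hk₀, sum_eq_single k₀ (fun k _ hk => if_neg (hJ.ne hk.symm)) (by simp),
        if_pos rfl]
    · rw [hg _ hi]
      exact (sum_eq_zero fun k _ => if_neg fun h => hi ⟨k, h.symm⟩).symm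
  simp only [hfiber]
  rw [sum_comm]
  simp only [sum_ite, sum_const_zero, add_zero, sum_const]

open Finset in
theorem Amat_apply_eq_card {L M N : ℕ} (hL : 0 < L) (t : Fin M → ℕ) (J : Fin N → ℤ) (b : Fin L)
    (ℓ k : Fin N) : Amat L M t J b ℓ k = #{i | J ℓ * L + b - t i = J k} := by
  have hL' : (0 : ℝ) < L := by positivity
  have himage : ∀ i : Fin M, (fun x : ℝ => x / L + t i) '' basicInt L J k
      = Icc ((J k : ℝ) + t i) ((J k : ℝ) + t i + 1) := by
    intro i
    have hf : (fun x : ℝ => x / L + t i) = fun x => (L : ℝ)⁻¹ * x + t i := by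
      funext x; rw [div_eq_inv_mul]
    rw [hf, basicInt, image_affine_Icc' (inv_pos.2 hL')]
    congr 1
    · field_simp
    · field_simp; ring
  rw [Amat, ← ncard_coe_finset]
  congr 1
  ext i
  simp only [coe_filter, Finset.mem_univ, true_and]
  change _ = _ ↔ _
  rw [himage, Icc_eq_Icc_iff (by linarith)]
  constructor
  · rintro ⟨h, -⟩
    exact_mod_cast (by push_cast; linarith : ((J ℓ * L + b - t i : ℤ) : ℝ) = J k)
  · intro h
    have h' : ((J ℓ * L + b - t i : ℤ) : ℝ) = J k := by exact_mod_cast h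
    push_cast at h'
    constructor <;> linarith

theorem nu_subCylinder_recursion_general
    (L M : ℕ)
    (t : Fin M → ℕ)
    -- the natural self-similar measure ν (pushforward of the Bernoulli measure):
    (ν : Measure ℝ)
    (hν : ν = (M : ℝ≥0∞)⁻¹ • ∑ i : Fin M, Measure.map (fun x => x / (L : ℝ) + (t i : ℝ)) ν)
    -- the basic types J^0 < ⋯ < J^{N-1}:
    (N : ℕ) (J : Fin N → ℤ) (hJmono : StrictMono J)
    (hJall : ∀ z : ℤ, 0 < ν (Set.Icc ((z : ℝ) * L) ((z : ℝ) * L + L)) → ∃ k, J k = z) :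
    ∀ (ℓ : Fin N) (b : Fin L) (n : ℕ) (a : Fin n → Fin L),
      ν (subCylinder L J ℓ (Fin.cons b a))
        = ∑ k : Fin N, (M : ℝ≥0∞)⁻¹ * (Amat L M t J b ℓ k : ℝ≥0∞) * ν (subCylinder L J k a) := by
  intro ℓ b n a
  have hL : 0 < L := b.pos
  have hpreimage (i : Fin M) : (fun x : ℝ => x / L + t i) ⁻¹' cylinder L (J ℓ) (Fin.cons b a)
      = cylinder L (J ℓ * L + b - t i) a := by
    exact_mod_cast preimage_cylinder_cons hL (t i) (J ℓ) b a
  have hnull : ∀ z ∉ range J, ν (cylinder L z a) = 0 := fun z hz =>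
    measure_mono_null (cylinder_subset_Icc hL z a) (by_contra fun h =>
      hz (hJall z (pos_iff_ne_zero.2 h)))
  rw [subCylinder_eq_cylinder,
    measure_apply_eq_mul_sum_preimage hν (fun i => by fun_prop) (by exact measurableSet_Icc)]
  simp only [hpreimage, Finset.sum_comp_eq_sum_card_nsmul hJmono.injective _ hnull,
    Amat_apply_eq_card hL, Finset.mul_sum, nsmul_eq_mul, mul_assoc, subCylinder_eq_cylinder]

/-- **Fact.** `ν(J^ℓ_{bā}) = Σ_{k∈[N]} (1/M)·A_b(ℓ,k)·ν(J^k_ā)`. -/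
theorem nu_subCylinder_recursion
    (L M : ℕ) (hL : 2 ≤ L) (hM : 0 < M)
    (t : Fin M → ℕ) (ht0 : t ⟨0, hM⟩ = 0) (hmono : Monotone t)
    (hdvd : (L - 1) ∣ t ⟨M - 1, Nat.sub_lt hM Nat.one_pos⟩)
    -- the natural self-similar measure ν (pushforward of the Bernoulli measure):
    (ν : Measure ℝ) (hνprob : IsProbabilityMeasure ν)
    (hν : ν = (M : ℝ≥0∞)⁻¹ • ∑ i : Fin M, Measure.map (fun x => x / (L : ℝ) + (t i : ℝ)) ν)
    -- the basic types J^0 < ⋯ < J^{N-1}: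
    (N : ℕ) (J : Fin N → ℤ) (hJmono : StrictMono J)
    (hJpos : ∀ k : Fin N, 0 < ν (basicInt L J k))
    (hJall : ∀ z : ℤ, 0 < ν (Set.Icc ((z : ℝ) * L) ((z : ℝ) * L + L)) → ∃ k, J k = z) :
    ∀ (ℓ : Fin N) (b : Fin L) (n : ℕ) (a : Fin n → Fin L),
      ν (subCylinder L J ℓ (Fin.cons b a))
        = ∑ k : Fin N, (M : ℝ≥0∞)⁻¹ * (Amat L M t J b ℓ k : ℝ≥0∞) * ν (subCylinder L J k a) :=
  nu_subCylinder_recursion_general L M t ν hν N J hJmono hJall
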